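/- arXiv:0801.0249 — 5 statements merged into one kernel-verified Lean document; each statement's English description precedes it below -/
import Mathlib

section
/- Let Y be a finite simple graph on vertex set {1,…,n} and let σ, τ be permutations of {1,…,n} that differ by a transposition of two adjacent positions i, i+1 such that {σ(i), σ(i+1)} is not an edge of Y. Then for any family of Y-local functions f_1,…,f_n : X^n → X^n, the sequential compositions satisfy Φ_σ = Φ_τ. -/
/-- `fv` is a `Y`-local function for vertex `v`: it changes only coordinate `v`,
and its value at `v` depends only on the closed neighborhood of `v` in `Y`. -/
def IsYLocal {X : Type*} {n : ℕ} (Y : SimpleGraph (Fin n)) (v : Fin n)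
    (fv : (Fin n → X) → (Fin n → X)) : Prop :=
  (∀ x w, w ≠ v → fv x w = x w) ∧
  (∀ x y, (∀ w, (w = v ∨ Y.Adj v w) → x w = y w) → fv x v = fv y v)

/-- Sequential composition `f_{π(n)} ∘ ⋯ ∘ f_{π(1)}`. -/
def seqComp {X : Type*} {n : ℕ} (f : Fin n → ((Fin n → X) → (Fin n → X)))
    (π : Equiv.Perm (Fin n)) : (Fin n → X) → (Fin n → X) :=
  fun x => (List.ofFn fun i => f (π i)).foldl (fun s g => g s) x

/-! Two `Y`-local maps at distinct non-adjacent vertices commute: each one changes only a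
coordinate the other does not read. Swapping the adjacent positions `i`, `i + 1` of `σ` swaps
exactly two consecutive factors of `Φ_σ`, which are such a commuting pair. -/

namespace IsYLocal

variable {X : Type*} {n : ℕ} {Y : SimpleGraph (Fin n)} {u v : Fin n}
  {fu fv : (Fin n → X) → (Fin n → X)}

theorem apply_apply_self (hu : IsYLocal Y u fu) (hv : IsYLocal Y v fv) (huv : u ≠ v)
    (hadj : ¬ Y.Adj u v) (x : Fin n → X) : fu (fv x) u = fu x u :=
  hu.2 _ _ fun w hw => hv.1 x w <| by
    rintro rfl
    rcases hw with h | h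
    exacts [huv h.symm, hadj h]

theorem comp_comm (hu : IsYLocal Y u fu) (hv : IsYLocal Y v fv) (huv : u ≠ v)
    (hadj : ¬ Y.Adj u v) : fu ∘ fv = fv ∘ fu := by
  funext x w
  simp only [Function.comp_apply]
  by_cases hwu : w = u
  · subst hwu
    rw [hu.apply_apply_self hv huv hadj, hv.1 _ _ huv]
  by_cases hwv : w = v
  · subst hwv
    rw [hv.apply_apply_self hu huv.symm (hadj ∘ SimpleGraph.Adj.symm), hu.1 _ _ huv.symm]
  rw [hu.1 _ _ hwu, hv.1 _ _ hwv, hv.1 _ _ hwv, hu.1 _ _ hwu]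

end IsYLocal

namespace List

variable {α : Type*}

theorem foldl_apply_append_cons_cons_comm (l₁ l₂ : List (α → α)) {a b : α → α}
    (hab : a ∘ b = b ∘ a) (x : α) :
    (l₁ ++ a :: b :: l₂).foldl (fun s g => g s) x =
      (l₁ ++ b :: a :: l₂).foldl (fun s g => g s) x := by
  simp only [foldl_append, foldl_cons]
  exact congrArg (foldl _ · l₂) (congrFun hab.symm _)

variable {n : ℕ} (g : Fin n → α) {i j : Fin n}

theorem ofFn_eq_take_append_cons_cons_drop (hij : (j : ℕ) = i + 1) :
    ofFn g = (ofFn g).take i ++ g i :: g j :: (ofFn g).drop (i + 2) := by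
  have hj : (i : ℕ) + 1 < (ofFn g).length := by simp [← hij]
  have hgj : g j = g ⟨i + 1, by simpa using hj⟩ := congrArg g (Fin.ext hij)
  conv_lhs => rw [← take_append_drop i (ofFn g), drop_eq_getElem_cons (by omega),
    drop_eq_getElem_cons hj]
  simp only [List.getElem_ofFn, hgj]

theorem ofFn_comp_swap_eq_take_append_cons_cons_drop (hij : (j : ℕ) = i + 1) :
    ofFn (g ∘ Equiv.swap i j) = (ofFn g).take i ++ g j :: g i :: (ofFn g).drop (i + 2) := by
  apply ext_getElem
  · simp only [length_ofFn, length_append, length_take, length_cons, length_drop]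
    omega
  · intro k _ _
    simp only [List.getElem_ofFn, Function.comp_apply, Equiv.swap_apply_def, Fin.ext_iff,
      getElem_append, length_take, length_ofFn, getElem_cons, getElem_take, getElem_drop]
    split_ifs <;> grind

end List

theorem adjacent_transposition_same_sds_general {X : Type*} {n : ℕ}
    (Y : SimpleGraph (Fin n)) (f : Fin n → ((Fin n → X) → (Fin n → X)))
    (hloc : ∀ v, IsYLocal Y v (f v))
    (σ τ : Equiv.Perm (Fin n)) (i j : Fin n) (hij : (j : ℕ) = (i : ℕ) + 1)
    (hτ : τ = σ * Equiv.swap i j) (hadj : ¬ Y.Adj (σ i) (σ j)) :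
    seqComp f σ = seqComp f τ := by
  subst hτ
  have hne : σ i ≠ σ j := σ.injective.ne fun h => by simp [h] at hij
  funext x
  change (List.ofFn (f ∘ σ)).foldl _ x = (List.ofFn ((f ∘ σ) ∘ Equiv.swap i j)).foldl _ x
  rw [List.ofFn_comp_swap_eq_take_append_cons_cons_drop _ hij]
  conv_lhs => rw [List.ofFn_eq_take_append_cons_cons_drop _ hij]
  exact List.foldl_apply_append_cons_cons_comm _ _ ((hloc _).comp_comm (hloc _) hne hadj) x

theorem adjacent_transposition_same_sds {X : Type*} [Fintype X] {n : ℕ}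
    (Y : SimpleGraph (Fin n)) (f : Fin n → ((Fin n → X) → (Fin n → X)))
    (hloc : ∀ v, IsYLocal Y v (f v))
    (σ τ : Equiv.Perm (Fin n)) (i j : Fin n) (hij : (j : ℕ) = (i : ℕ) + 1)
    (hτ : τ = σ * Equiv.swap i j) (hadj : ¬ Y.Adj (σ i) (σ j)) :
    seqComp f σ = seqComp f τ :=
  adjacent_transposition_same_sds_general Y f hloc σ τ i j hij hτ hadj
end

section
/- For a finite simple graph Y, there is a bijection between the connected components of the update graph U(Y) and the acyclic orientations of Y. -/
/-- The edge relation of the update graph `U(Y)`: two permutations are related iff they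
differ by a transposition of two adjacent positions `i`, `i+1` whose entries are
not adjacent in `Y`. -/
def updRel {n : ℕ} (Y : SimpleGraph (Fin n)) (σ τ : Equiv.Perm (Fin n)) : Prop :=
  ∃ i j : Fin n, (j : ℕ) = (i : ℕ) + 1 ∧ τ = σ * Equiv.swap i j ∧ ¬ Y.Adj (σ i) (σ j)

/-- The orientation of `Y` induced by a permutation `σ`: each edge is directed from the
vertex occurring earlier in `σ` to the one occurring later. -/
def inducedOrientation {n : ℕ} (Y : SimpleGraph (Fin n)) (σ : Equiv.Perm (Fin n)) :
    Fin n → Fin n → Prop :=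
  fun u v => Y.Adj u v ∧ σ.symm u < σ.symm v

/-- `o` is an acyclic orientation of `Y`. -/
def IsAcyclicOrientation {n : ℕ} (Y : SimpleGraph (Fin n)) (o : Fin n → Fin n → Prop) : Prop :=
  (∀ u v, o u v → Y.Adj u v) ∧
  (∀ u v, Y.Adj u v → (o u v ↔ ¬ o v u)) ∧
  (∀ u, ¬ Relation.TransGen o u u)

/-! Swapping the entries at adjacent positions `i, i+1` of `σ` changes the relative order of
exactly one pair of vertices, `{σ i, σ (i+1)}`; when these are not adjacent in `Y`, the induced
orientation is unchanged, so it is constant on components of `U(Y)`. Conversely, if `σ ≠ τ` induce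
the same orientation, some adjacent pair of `σ` appears in the opposite order in `τ`, so it is not
an edge; swapping it yields a neighbour of `σ` with fewer pairs ordered differently from `τ`, and
induction connects `σ` to `τ`. Every acyclic orientation is induced by a permutation: sort the
vertices by their number of ancestors. -/

open Equiv

lemma Fin.swap_lt_swap_iff {n : ℕ} {i j a b : Fin n} (hij : (j : ℕ) = i + 1)
    (hab : s(a, b) ≠ s(i, j)) : swap i j a < swap i j b ↔ a < b := by
  simp only [ne_eq, Sym2.eq_iff, not_or, not_and] at hab
  simp only [swap_apply_def]
  split_ifs <;> simp only [Fin.lt_def, Fin.ext_iff] at * <;> omega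

lemma Equiv.Perm.exists_adjacent_descent {n : ℕ} {π : Perm (Fin n)} (hπ : π ≠ 1) :
    ∃ i j : Fin n, (j : ℕ) = i + 1 ∧ π j < π i := by
  contrapose! hπ
  rw [← π.monotone_iff, monotone_iff_forall_covBy]
  intro a b hab
  rw [Fin.covBy_iff, Nat.covBy_iff_add_one_eq] at hab
  exact hπ a b hab.symm

lemma Equiv.Perm.mul_swap_symm_lt_iff {n : ℕ} {σ : Perm (Fin n)} {i j u v : Fin n}
    (hij : (j : ℕ) = i + 1) (huv : s(u, v) ≠ s(σ i, σ j)) :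
    (σ * swap i j).symm u < (σ * swap i j).symm v ↔ σ.symm u < σ.symm v := by
  simp only [Perm.mul_def, symm_trans_apply, symm_swap]
  refine Fin.swap_lt_swap_iff hij fun h => huv ?_
  simpa using congrArg (Sym2.map σ) h

section UpdateGraph

variable {n : ℕ} (Y : SimpleGraph (Fin n))

lemma isAcyclicOrientation_inducedOrientation (σ : Perm (Fin n)) :
    IsAcyclicOrientation Y (inducedOrientation Y σ) := by
  refine ⟨fun u v h => h.1, fun u v huv => ?_, fun u hu => ?_⟩
  · have hne : σ.symm u ≠ σ.symm v := σ.symm.injective.ne (Y.ne_of_adj huv)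
    simp only [inducedOrientation, huv, huv.symm, true_and, not_lt]
    exact ⟨le_of_lt, fun h => lt_of_le_of_ne h hne⟩
  · have hlt : ∀ a b, Relation.TransGen (inducedOrientation Y σ) a b → σ.symm a < σ.symm b :=
      fun a b hab => Relation.TransGen.trans_induction_on hab (fun h => h.2)
        fun _ _ => lt_trans
    exact lt_irrefl _ (hlt u u hu)

variable {Y}

lemma inducedOrientation_eq_of_updRel {σ τ : Perm (Fin n)} (h : updRel Y σ τ) :
    inducedOrientation Y σ = inducedOrientation Y τ := by
  obtain ⟨i, j, hij, rfl, hnadj⟩ := h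
  funext u v
  refine propext (and_congr_right fun huv => (Perm.mul_swap_symm_lt_iff hij ?_).symm)
  intro h
  exact hnadj (by rwa [← SimpleGraph.mem_edgeSet, ← h])

lemma inducedOrientation_eq_of_eqvGen {σ τ : Perm (Fin n)}
    (h : Relation.EqvGen (updRel Y) σ τ) : inducedOrientation Y σ = inducedOrientation Y τ := by
  induction h with
  | rel _ _ h => exact inducedOrientation_eq_of_updRel h
  | refl _ => rfl
  | symm _ _ _ ih => exact ih.symm
  | trans _ _ _ _ _ ih₁ ih₂ => exact ih₁.trans ih₂

end UpdateGraph

def discordantPairs {n : ℕ} (σ τ : Perm (Fin n)) : Finset (Fin n × Fin n) :=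
  Finset.univ.filter fun p => σ.symm p.1 < σ.symm p.2 ∧ τ.symm p.2 < τ.symm p.1

lemma discordantPairs_mul_swap_ssubset {n : ℕ} {σ τ : Perm (Fin n)} {i j : Fin n}
    (hij : (j : ℕ) = i + 1) (hdesc : τ.symm (σ j) < τ.symm (σ i)) :
    discordantPairs (σ * swap i j) τ ⊂ discordantPairs σ τ := by
  have hlt : i < j := by rw [Fin.lt_def]; omega
  simp only [Finset.ssubset_iff_subset_ne, discordantPairs, Finset.subset_iff, ne_eq,
    Finset.ext_iff, Finset.mem_filter, Finset.mem_univ, true_and, Prod.forall, not_forall]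
  constructor
  · rintro u v ⟨huv, hτ⟩
    refine ⟨(Perm.mul_swap_symm_lt_iff hij ?_).1 huv, hτ⟩
    rintro h
    rcases Sym2.eq_iff.1 h with ⟨rfl, rfl⟩ | ⟨rfl, rfl⟩
    · exact lt_asymm hlt (by simpa [Perm.mul_def] using huv)
    · exact lt_asymm hdesc hτ
  · refine ⟨σ i, σ j, ?_⟩
    simp [Perm.mul_def, hlt.le, hlt, hdesc]

lemma eqvGen_updRel_of_inducedOrientation_eq {n : ℕ} {Y : SimpleGraph (Fin n)}
    {σ τ : Perm (Fin n)} (h : inducedOrientation Y σ = inducedOrientation Y τ) :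
    Relation.EqvGen (updRel Y) σ τ := by
  by_cases hστ : σ = τ
  · exact hστ ▸ Relation.EqvGen.refl σ
  obtain ⟨i, j, hij, hdesc⟩ :=
    Perm.exists_adjacent_descent (mt inv_mul_eq_one.1 (Ne.symm hστ) : τ⁻¹ * σ ≠ 1)
  replace hdesc : τ.symm (σ j) < τ.symm (σ i) := hdesc
  have hnadj : ¬ Y.Adj (σ i) (σ j) := fun hadj => by
    have hσ : inducedOrientation Y σ (σ i) (σ j) := ⟨hadj, by simp [Fin.lt_def, hij]⟩
    exact lt_asymm (h ▸ hσ).2 hdesc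
  have hstep : updRel Y σ (σ * swap i j) := ⟨i, j, hij, rfl, hnadj⟩
  have hdecr := discordantPairs_mul_swap_ssubset hij hdesc
  exact (Relation.EqvGen.rel _ _ hstep).trans _ _ _
    (eqvGen_updRel_of_inducedOrientation_eq ((inducedOrientation_eq_of_updRel hstep).symm.trans h))
termination_by (discordantPairs σ τ).card
decreasing_by exact Finset.card_lt_card hdecr

lemma exists_lt_of_forall_not_transGen_self {α : Type*} [Fintype α] {r : α → α → Prop}
    (hr : ∀ a, ¬ Relation.TransGen r a a) : ∃ f : α → ℕ, ∀ a b, r a b → f a < f b := by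
  classical
  refine ⟨fun a => (Finset.univ.filter fun c => Relation.TransGen r c a).card, fun a b hab => ?_⟩
  refine Finset.card_lt_card (Finset.ssubset_iff_of_subset ?_ |>.2 ⟨a, ?_, ?_⟩)
  · intro c
    simp only [Finset.mem_filter, Finset.mem_univ, true_and]
    exact fun hca => hca.tail hab
  · simpa using Relation.TransGen.single hab
  · simpa using hr a

lemma exists_inducedOrientation_eq {n : ℕ} {Y : SimpleGraph (Fin n)}
    {o : Fin n → Fin n → Prop} (ho : IsAcyclicOrientation Y o) :
    ∃ σ : Perm (Fin n), inducedOrientation Y σ = o := by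
  obtain ⟨hoY, hanti, hacyc⟩ := ho
  obtain ⟨f, hf⟩ := exists_lt_of_forall_not_transGen_self hacyc
  let σ := Tuple.sort f
  have hle : ∀ u v, σ.symm u < σ.symm v → f u ≤ f v := fun u v huv => by
    simpa [σ] using Tuple.monotone_sort f huv.le
  refine ⟨σ, funext₂ fun u v => propext ⟨fun ⟨huv, hlt⟩ => ?_, fun huv => ⟨hoY u v huv, ?_⟩⟩⟩
  · exact (hanti u v huv).2 fun hvu => (hf v u hvu).not_ge (hle u v hlt)
  · exact lt_of_not_ge fun hvu => (hf u v huv).not_ge (hle v u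
      (lt_of_le_of_ne hvu (σ.symm.injective.ne (Y.ne_of_adj (hoY u v huv)).symm)))

def componentOrientation {n : ℕ} (Y : SimpleGraph (Fin n)) :
    Quot (Relation.EqvGen (updRel Y)) → {o : Fin n → Fin n → Prop // IsAcyclicOrientation Y o} :=
  Quot.lift (fun σ => ⟨inducedOrientation Y σ, isAcyclicOrientation_inducedOrientation Y σ⟩)
    fun _ _ h => Subtype.ext (inducedOrientation_eq_of_eqvGen h)

theorem update_graph_components_biject_with_acyclic_orientations {n : ℕ}
    (Y : SimpleGraph (Fin n)) :
    ∃ e : Quot (Relation.EqvGen (updRel Y)) ≃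
        {o : Fin n → Fin n → Prop // IsAcyclicOrientation Y o},
      ∀ σ : Equiv.Perm (Fin n),
        (e (Quot.mk _ σ)).val = inducedOrientation Y σ := by
  have hinj : Function.Injective (componentOrientation Y) := by
    rintro ⟨σ⟩ ⟨τ⟩ h
    exact Quot.sound (eqvGen_updRel_of_inducedOrientation_eq (congrArg Subtype.val h))
  have hsurj : Function.Surjective (componentOrientation Y) := by
    rintro ⟨o, ho⟩
    obtain ⟨σ, hσ⟩ := exists_inducedOrientation_eq ho
    exact ⟨Quot.mk _ σ, Subtype.ext hσ⟩
  exact ⟨Equiv.ofBijective _ ⟨hinj, hsurj⟩, fun σ => rfl⟩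
end

section
/- A Boolean monomial dynamical system whose dependency graph is strongly connected with loop number 1 has only fixed points as periodic points; conversely, if its dependency graph is strongly connected with loop number greater than 1, then it has a periodic point that is not a fixed point. -/
/-!
A zero coordinate spreads along walks: if `x j = 0` and there is a walk of length `ℓ` from `j`
to `i`, then `(Φ^[ℓ] x) i = 0`. If the loop number is 1, closed walks at `v` exist of every
large length (Frobenius), so by strong connectivity any two vertices are joined by walks of
every large length; taking a length divisible by the period, a periodic point with one zero
coordinate is `0`, and otherwise it is `1`, both fixed points.

If the loop number `d` is larger, all walks from `v` to `i` have the same length modulo `d`,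
which yields a level function `ι → ZMod d` increasing by one along every edge. `Φ` shifts the
indicator of one level to the indicator of the next, so the indicator of level `0` has period
`d` but is not fixed.
-/

/-- There is a closed directed walk of length `ℓ` through `v₀` in the directed graph
with an edge from `j` to `i` iff `j ∈ S i`. -/
def HasClosedWalk {n : ℕ} (S : Fin n → Finset (Fin n)) (v₀ : Fin n) (ℓ : ℕ) : Prop :=
  ∃ w : ℕ → Fin n, w 0 = v₀ ∧ w ℓ = v₀ ∧ ∀ k < ℓ, w k ∈ S (w (k + 1))

open Function

variable {ι : Type*}

-- As in `HasClosedWalk`, `j ∈ S i` is an edge from `j` to `i`.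
def HasWalk (S : ι → Finset ι) (j i : ι) (ℓ : ℕ) : Prop :=
  ∃ w : ℕ → ι, w 0 = j ∧ w ℓ = i ∧ ∀ k < ℓ, w k ∈ S (w (k + 1))

namespace HasWalk

variable {S : ι → Finset ι} {a b c i j : ι} {ℓ p q : ℕ}

theorem refl (i : ι) : HasWalk S i i 0 :=
  ⟨fun _ => i, rfl, rfl, fun _ hk => absurd hk (Nat.not_lt_zero _)⟩

theorem single (h : j ∈ S i) : HasWalk S j i 1 :=
  ⟨fun k => if k = 0 then j else i, rfl, rfl, fun k hk => by simpa [Nat.lt_one_iff.mp hk]⟩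

theorem append (h₁ : HasWalk S a b p) (h₂ : HasWalk S b c q) : HasWalk S a c (p + q) := by
  obtain ⟨w₁, hw₁0, hw₁p, hw₁⟩ := h₁
  obtain ⟨w₂, hw₂0, hw₂q, hw₂⟩ := h₂
  refine ⟨fun k => if k ≤ p then w₁ k else w₂ (k - p), by simp [hw₁0], ?_, fun k hk => ?_⟩
  · rcases q.eq_zero_or_pos with rfl | hq
    · simp [hw₁p, ← hw₂0, hw₂q]
    · simp [show ¬p + q ≤ p by omega, hw₂q]
  · rcases lt_trichotomy k p with hkp | rfl | hkp
    · simpa [hkp.le, Nat.succ_le_of_lt hkp] using hw₁ k hkp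
    · simpa [hw₁p, ← hw₂0] using hw₂ 0 (by omega)
    · simpa [show ¬k ≤ p by omega, show ¬k + 1 ≤ p by omega, Nat.sub_add_comm hkp.le]
        using hw₂ (k - p) (by omega)

theorem exists_mem_of_succ (h : HasWalk S j i (ℓ + 1)) : ∃ k ∈ S i, HasWalk S j k ℓ := by
  obtain ⟨w, hw0, hwℓ, hw⟩ := h
  exact ⟨w ℓ, hwℓ ▸ hw ℓ ℓ.lt_succ_self, w, hw0, rfl, fun k hk => hw k (by omega)⟩

theorem nonempty_of_pos (h : HasWalk S j i ℓ) (hℓ : 0 < ℓ) : (S i).Nonempty := by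
  obtain ⟨ℓ, rfl⟩ := Nat.exists_eq_add_one_of_ne_zero hℓ.ne'
  obtain ⟨k, hk, -⟩ := h.exists_mem_of_succ
  exact ⟨k, hk⟩

end HasWalk

theorem Relation.ReflTransGen.exists_hasWalk {S : ι → Finset ι} {a b : ι}
    (h : Relation.ReflTransGen (fun j i => j ∈ S i) a b) : ∃ ℓ, HasWalk S a b ℓ := by
  induction h with
  | refl => exact ⟨0, .refl a⟩
  | tail _ hbc ih =>
    obtain ⟨ℓ, hℓ⟩ := ih
    exact ⟨ℓ + 1, hℓ.append (.single hbc)⟩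

def closedWalkLengths (S : ι → Finset ι) (v : ι) : AddSubmonoid ℕ where
  carrier := {ℓ | HasWalk S v v ℓ}
  add_mem' := HasWalk.append
  zero_mem' := HasWalk.refl v

theorem Nat.eq_setGcd {s : Set ℕ} {d : ℕ} (h₁ : ∀ ℓ, 1 ≤ ℓ → ℓ ∈ s → d ∣ ℓ)
    (h₂ : ∀ e, (∀ ℓ, 1 ≤ ℓ → ℓ ∈ s → e ∣ ℓ) → e ∣ d) : d = Nat.setGcd s := by
  refine Nat.dvd_antisymm (Nat.dvd_setGcd_iff.mpr fun ℓ hℓ => ?_)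
    (h₂ _ fun ℓ _ hℓ => Nat.setGcd_dvd_of_mem hℓ)
  rcases ℓ.eq_zero_or_pos with rfl | hpos
  · exact dvd_zero d
  · exact h₁ ℓ hpos hℓ

def monomialMap {M : Type*} [CommMonoid M] (S : ι → Finset ι) (x : ι → M) : ι → M :=
  fun i => ∏ j ∈ S i, x j

def levelIndicator {G : Type*} (M : Type*) [One M] [Zero M] [DecidableEq G] (level : ι → G)
    (g : G) : ι → M :=
  fun i => if level i = g then 1 else 0

section MonomialMap

variable {M : Type*} {S : ι → Finset ι}

theorem monomialMap_one [CommMonoid M] : monomialMap S (1 : ι → M) = 1 :=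
  funext fun _ => Finset.prod_const_one

variable [CommMonoidWithZero M]

theorem monomialMap_zero (hne : ∀ i, (S i).Nonempty) : monomialMap S (0 : ι → M) = 0 :=
  funext fun i => Finset.prod_eq_zero (hne i).choose_spec rfl

theorem iterate_monomialMap_apply_eq_zero {x : ι → M} {i j : ι} {ℓ : ℕ} (hw : HasWalk S j i ℓ)
    (hx : x j = 0) : (monomialMap S)^[ℓ] x i = 0 := by
  induction ℓ generalizing i with
  | zero =>
    obtain ⟨w, rfl, rfl, -⟩ := hw
    exact hx
  | succ ℓ ih =>
    obtain ⟨k, hk, hw⟩ := hw.exists_mem_of_succ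
    rw [iterate_succ_apply']
    exact Finset.prod_eq_zero hk (ih hw)

theorem monomialMap_levelIndicator {G : Type*} [DecidableEq G] [Add G] [One G] [IsRightCancelAdd G]
    {level : ι → G} (hlevel : ∀ i, ∀ j ∈ S i, level i = level j + 1)
    (hne : ∀ i, (S i).Nonempty) (g : G) :
    monomialMap S (levelIndicator M level g) = levelIndicator M level (g + 1) := by
  funext i
  by_cases hi : level i = g + 1
  · rw [levelIndicator, if_pos hi]
    refine Finset.prod_eq_one fun j hj => if_pos ?_
    exact add_right_cancel ((hlevel i j hj).symm.trans hi)
  · rw [levelIndicator, if_neg hi]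
    obtain ⟨j, hj⟩ := hne i
    refine Finset.prod_eq_zero hj (if_neg fun hj' => hi ?_)
    rw [hlevel i j hj, hj']

theorem iterate_monomialMap_levelIndicator {G : Type*} [DecidableEq G] [AddMonoidWithOne G]
    [IsRightCancelAdd G] {level : ι → G} (hlevel : ∀ i, ∀ j ∈ S i, level i = level j + 1)
    (hne : ∀ i, (S i).Nonempty) (g : G) (m : ℕ) :
    (monomialMap S)^[m] (levelIndicator M level g) = levelIndicator M level (g + m) := by
  induction m with
  | zero => simp
  | succ m ih =>
    rw [iterate_succ_apply', ih, monomialMap_levelIndicator hlevel hne, Nat.cast_succ, add_assoc]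

end MonomialMap

def IsStronglyConnected (S : ι → Finset ι) : Prop :=
  ∀ a b, Relation.ReflTransGen (fun j i => j ∈ S i) a b

namespace IsStronglyConnected

variable {S : ι → Finset ι} {v : ι}

theorem nonempty_of_setGcd_ne_zero (hS : IsStronglyConnected S)
    (h : Nat.setGcd (closedWalkLengths S v) ≠ 0) (i : ι) : (S i).Nonempty := by
  obtain ⟨ℓ, hℓ, hℓ0⟩ := Nat.exists_ne_zero_of_setGcd_ne_zero h
  obtain ⟨p, hp⟩ := (hS v i).exists_hasWalk
  exact (HasWalk.append hℓ hp).nonempty_of_pos (by omega)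

theorem exists_forall_ge_hasWalk (hS : IsStronglyConnected S)
    (h : Nat.setGcd (closedWalkLengths S v) = 1) (i j : ι) :
    ∃ N, ∀ m ≥ N, HasWalk S j i m := by
  obtain ⟨N, hN⟩ := Nat.exists_mem_closure_of_ge (closedWalkLengths S v : Set ℕ)
  obtain ⟨p, hp⟩ := (hS j v).exists_hasWalk
  obtain ⟨q, hq⟩ := (hS v i).exists_hasWalk
  refine ⟨N + p + q, fun m hm => ?_⟩
  have hloop : HasWalk S v v (m - p - q) := by
    rw [AddSubmonoid.closure_eq] at hN
    exact hN _ (by omega) (h ▸ one_dvd _)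
  simpa [show p + (m - p - q) + q = m by omega] using (hp.append hloop).append hq

theorem natCast_eq_of_hasWalk (hS : IsStronglyConnected S) {i : ι} {p q : ℕ}
    (hp : HasWalk S v i p) (hq : HasWalk S v i q) :
    (p : ZMod (Nat.setGcd (closedWalkLengths S v))) = q := by
  obtain ⟨r, hr⟩ := (hS i v).exists_hasWalk
  have hcast {ℓ : ℕ} (hℓ : HasWalk S v i ℓ) :
      (ℓ : ZMod (Nat.setGcd (closedWalkLengths S v))) = -r := by
    rw [eq_neg_iff_add_eq_zero, ← Nat.cast_add, ZMod.natCast_eq_zero_iff]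
    exact Nat.setGcd_dvd_of_mem (hℓ.append hr)
  rw [hcast hp, hcast hq]

theorem exists_level (hS : IsStronglyConnected S) :
    ∃ level : ι → ZMod (Nat.setGcd (closedWalkLengths S v)),
      level v = 0 ∧ ∀ i, ∀ j ∈ S i, level i = level j + 1 := by
  choose P hP using fun i => (hS v i).exists_hasWalk
  refine ⟨fun i => P i, ?_, fun i j hj => ?_⟩
  · simpa using hS.natCast_eq_of_hasWalk (hP v) (.refl v)
  · simpa using hS.natCast_eq_of_hasWalk (hP i) ((hP j).append (.single hj))

theorem eq_zero_of_isPeriodicPt {M : Type*} [CommMonoidWithZero M] (hS : IsStronglyConnected S)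
    (h : Nat.setGcd (closedWalkLengths S v) = 1) {x : ι → M} {t : ℕ} (ht : 0 < t)
    (hx : IsPeriodicPt (monomialMap S) t x) {j : ι} (hj : x j = 0) : x = 0 := by
  funext i
  obtain ⟨N, hN⟩ := hS.exists_forall_ge_hasWalk h i j
  rw [← (hx.const_mul N).eq]
  exact iterate_monomialMap_apply_eq_zero (hN _ (Nat.le_mul_of_pos_right N ht)) hj

theorem isFixedPt_of_isPeriodicPt (hS : IsStronglyConnected S)
    (h : Nat.setGcd (closedWalkLengths S v) = 1) {x : ι → ZMod 2} {t : ℕ} (ht : 0 < t)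
    (hx : IsPeriodicPt (monomialMap S) t x) : IsFixedPt (monomialMap S) x := by
  by_cases hone : ∀ i, x i = 1
  · rw [show x = 1 from funext hone]
    exact monomialMap_one
  · push Not at hone
    obtain ⟨j, hj⟩ := hone
    have hj0 : x j = 0 := (by decide : ∀ a : ZMod 2, a ≠ 1 → a = 0) _ hj
    rw [hS.eq_zero_of_isPeriodicPt h ht hx hj0]
    exact monomialMap_zero (hS.nonempty_of_setGcd_ne_zero (by rw [h]; exact one_ne_zero))

theorem exists_isPeriodicPt_not_isFixedPt {M : Type*} [CommMonoidWithZero M] [Nontrivial M]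
    (hS : IsStronglyConnected S) (h : 1 < Nat.setGcd (closedWalkLengths S v)) :
    ∃ x : ι → M, IsPeriodicPt (monomialMap S) (Nat.setGcd (closedWalkLengths S v)) x ∧
      ¬IsFixedPt (monomialMap S) x := by
  have : Nontrivial (ZMod (Nat.setGcd (closedWalkLengths S v))) :=
    ZMod.nontrivial_iff.mpr h.ne'
  have hne := hS.nonempty_of_setGcd_ne_zero (v := v) (by omega)
  obtain ⟨level, hv, hlevel⟩ := hS.exists_level (v := v)
  refine ⟨levelIndicator M level 0, ?_, fun hfix => ?_⟩
  · rw [IsPeriodicPt, IsFixedPt, iterate_monomialMap_levelIndicator hlevel hne, ZMod.natCast_self,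
      add_zero]
  · have := congrFun hfix v
    rw [monomialMap_levelIndicator hlevel hne] at this
    simp [levelIndicator, hv] at this

end IsStronglyConnected

theorem boolean_monomial_loop_number_dichotomy_general {n : ℕ}
    (S : Fin n → Finset (Fin n))
    (Φ : (Fin n → ZMod 2) → (Fin n → ZMod 2))
    (hΦ : ∀ x i, Φ x i = ∏ j ∈ S i, x j)
    (hconn : ∀ a b : Fin n, Relation.ReflTransGen (fun j i => j ∈ S i) a b)
    (v₀ : Fin n) (d : ℕ)
    (hd1 : ∀ ℓ, 1 ≤ ℓ → HasClosedWalk S v₀ ℓ → d ∣ ℓ)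
    (hd2 : ∀ e : ℕ, (∀ ℓ, 1 ≤ ℓ → HasClosedWalk S v₀ ℓ → e ∣ ℓ) → e ∣ d) :
    (d = 1 → ∀ x t, 1 ≤ t → Φ^[t] x = x → Φ x = x) ∧
    (1 < d → ∃ x t, 1 ≤ t ∧ Φ^[t] x = x ∧ Φ x ≠ x) := by
  obtain rfl : Φ = monomialMap S := funext fun x => funext (hΦ x)
  obtain rfl : d = Nat.setGcd (closedWalkLengths S v₀) := Nat.eq_setGcd hd1 hd2
  refine ⟨fun h x t ht hx => IsStronglyConnected.isFixedPt_of_isPeriodicPt hconn h ht hx,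
    fun h => ?_⟩
  obtain ⟨x, hper, hfix⟩ :=
    IsStronglyConnected.exists_isPeriodicPt_not_isFixedPt (M := ZMod 2) hconn h
  exact ⟨x, _, h.le, hper, hfix⟩

theorem boolean_monomial_loop_number_dichotomy {n : ℕ} (hn : 1 ≤ n)
    (S : Fin n → Finset (Fin n))
    (Φ : (Fin n → ZMod 2) → (Fin n → ZMod 2))
    (hΦ : ∀ x i, Φ x i = ∏ j ∈ S i, x j)
    (hconn : ∀ a b : Fin n, Relation.ReflTransGen (fun j i => j ∈ S i) a b)
    (v₀ : Fin n) (d : ℕ)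
    (hd1 : ∀ ℓ, 1 ≤ ℓ → HasClosedWalk S v₀ ℓ → d ∣ ℓ)
    (hd2 : ∀ e : ℕ, (∀ ℓ, 1 ≤ ℓ → HasClosedWalk S v₀ ℓ → e ∣ ℓ) → e ∣ d) :
    (d = 1 → ∀ x t, 1 ≤ t → Φ^[t] x = x → Φ x = x) ∧
    (1 < d → ∃ x t, 1 ≤ t ∧ Φ^[t] x = x ∧ Φ x ≠ x) :=
  boolean_monomial_loop_number_dichotomy_general S Φ hΦ hconn v₀ d hd1 hd2
end

section
/- Let Y be a finite simple graph on {1,…,n} and for each vertex v let nor_v : F_2^n → F_2^n be the Y-local function setting coordinate v to Π_{w ∈ N[v]} (1 + x_w) (the NOR of the closed neighborhood). For any permutation update order π, every periodic point of the resulting sequential dynamical system Φ_π is the characteristic vector of an independent set of Y. -/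
/-- The `nor` local function at vertex `v`: coordinate `v` is set to
`∏_{w ∈ N[v]} (1 + x w)`, all other coordinates are unchanged. -/
def norFun {n : ℕ} (Y : SimpleGraph (Fin n)) [DecidableRel Y.Adj] (v : Fin n) :
    (Fin n → ZMod 2) → (Fin n → ZMod 2) :=
  fun x w =>
    if w = v then ∏ u ∈ Finset.univ.filter (fun u => u = v ∨ Y.Adj v u), (1 + x u)
    else x w

lemma norFun_apply_ne {n : ℕ} (Y : SimpleGraph (Fin n)) [DecidableRel Y.Adj]
    (v : Fin n) (s : Fin n → ZMod 2) (w : Fin n) (h : w ≠ v) :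
    norFun Y v s w = s w := by
  simp [norFun, h]

lemma norFun_apply_adj_one {n : ℕ} (Y : SimpleGraph (Fin n)) [DecidableRel Y.Adj]
    {u v : Fin n} (h : Y.Adj v u) (s : Fin n → ZMod 2) (hu : s u = 1) :
    norFun Y v s v = 0 := by
  simp only [norFun, if_pos rfl]
  apply Finset.prod_eq_zero (i := u)
  · simp [h]
  · rw [hu]; decide

lemma foldl_unchanged {n : ℕ} (Y : SimpleGraph (Fin n)) [DecidableRel Y.Adj] :
    ∀ (L : List (Fin n)) (s : Fin n → ZMod 2) (w : Fin n), w ∉ L →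
      L.foldl (fun s v => norFun Y v s) s w = s w := by
  intro L
  induction L with
  | nil => simp
  | cons a L ih =>
    intro s w hw
    simp only [List.mem_cons, not_or] at hw
    simp only [List.foldl_cons]
    rw [ih _ _ hw.2, norFun_apply_ne Y a s w hw.1]

lemma foldl_kill {n : ℕ} (Y : SimpleGraph (Fin n)) [DecidableRel Y.Adj] :
    ∀ (L : List (Fin n)) (s : Fin n → ZMod 2) (u v : Fin n), Y.Adj u v →
      u ∉ L → s u = 1 → v ∈ L →
      L.foldl (fun s w => norFun Y w s) s v = 0 := by
  intro L
  induction L with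
  | nil => simp
  | cons a L ih =>
    intro s u v hadj hu hsu hv
    simp only [List.mem_cons, not_or] at hu
    simp only [List.foldl_cons]
    have hsu' : norFun Y a s u = 1 := by
      rw [norFun_apply_ne Y a s u hu.1]; exact hsu
    rcases List.mem_cons.mp hv with hva | hvL
    · subst hva
      by_cases hvL : v ∈ L
      · exact ih _ u v hadj hu.2 hsu' hvL
      · rw [foldl_unchanged Y L _ v hvL]
        exact norFun_apply_adj_one Y hadj.symm s hsu
    · exact ih _ u v hadj hu.2 hsu' hvL

lemma zmod2_cases : ∀ a : ZMod 2, a = 0 ∨ a = 1 := by decide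

lemma foldl_indep {n : ℕ} (Y : SimpleGraph (Fin n)) [DecidableRel Y.Adj] :
    ∀ (L : List (Fin n)) (s : Fin n → ZMod 2) (u v : Fin n), Y.Adj u v →
      u ∈ L → v ∈ L →
      L.foldl (fun s w => norFun Y w s) s u = 0 ∨
      L.foldl (fun s w => norFun Y w s) s v = 0 := by
  intro L
  induction L with
  | nil => simp
  | cons a L ih =>
    intro s u v hadj hu hv
    simp only [List.foldl_cons]
    by_cases huL : u ∈ L
    · by_cases hvL : v ∈ L
      · exact ih _ u v hadj huL hvL
      · -- v = a, v ∉ L; swap roles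
        have hva : v = a := by
          rcases List.mem_cons.mp hv with h | h
          · exact h
          · exact absurd h hvL
        subst hva
        rcases zmod2_cases (norFun Y v s v) with h0 | h1
        · right; rw [foldl_unchanged Y L _ v hvL]; exact h0
        · left; exact foldl_kill Y L _ v u hadj.symm hvL h1 huL
    · have hua : u = a := by
        rcases List.mem_cons.mp hu with h | h
        · exact h
        · exact absurd h huL
      subst hua
      have hvL : v ∈ L := by
        rcases List.mem_cons.mp hv with h | h
        · exact absurd h.symm hadj.ne
        · exact h
      rcases zmod2_cases (norFun Y u s u) with h0 | h1
      · left; rw [foldl_unchanged Y L _ u huL]; exact h0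
      · right; exact foldl_kill Y L _ u v hadj huL h1 hvL

theorem nor_sds_periodic_points_are_independent_sets {n : ℕ}
    (Y : SimpleGraph (Fin n)) [DecidableRel Y.Adj] (π : Equiv.Perm (Fin n)) :
    ∀ (x : Fin n → ZMod 2) (t : ℕ), 1 ≤ t →
      (seqComp (norFun Y) π)^[t] x = x →
      ∀ u v : Fin n, x u = 1 → x v = 1 → ¬ Y.Adj u v := by
  intro x t ht hper u v hxu hxv hadj
  obtain ⟨t', rfl⟩ : ∃ t', t = t' + 1 := ⟨t - 1, by omega⟩
  have hx : x = seqComp (norFun Y) π ((seqComp (norFun Y) π)^[t'] x) := by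
    conv_lhs => rw [← hper]
    rw [Function.iterate_succ_apply']
  set x' := (seqComp (norFun Y) π)^[t'] x with hx'
  have hfold : seqComp (norFun Y) π x' =
      (List.ofFn fun i => π i).foldl (fun s w => norFun Y w s) x' := by
    show (List.ofFn fun i => norFun Y (π i)).foldl (fun s g => g s) x' = _
    rw [show (List.ofFn fun i => norFun Y (π i)) =
        (List.ofFn fun i => π i).map (norFun Y) by rw [List.map_ofFn]; rfl,
      List.foldl_map]
  have hmem : ∀ w : Fin n, w ∈ (List.ofFn fun i => π i) := by
    intro w
    rw [List.mem_ofFn]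
    exact ⟨π.symm w, by simp⟩
  have := foldl_indep Y (List.ofFn fun i => π i) x' u v hadj (hmem u) (hmem v)
  rw [← hfold, ← hx] at this
  rcases this with h | h
  · rw [hxu] at h; exact one_ne_zero h
  · rw [hxv] at h; exact one_ne_zero h
end

section
/- Over F_2, a local function f_v : F_2^n → F_2^n (changing only coordinate v, with new value g(x_v, x_{w_1},…,x_{w_k}) a symmetric function of the states in the closed neighborhood of v) is invertible if and only if g equals the parity function or the complement of the parity function on its arguments. -/
theorem symmetric_invertible_local_function_is_parity {k : ℕ}
    (g : (Fin (k + 1) → ZMod 2) → ZMod 2)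
    (hsym : ∀ (e : Equiv.Perm (Fin (k + 1))) (y : Fin (k + 1) → ZMod 2), g (y ∘ e) = g y) :
    (∀ y : Fin k → ZMod 2, g (Fin.cons 0 y) ≠ g (Fin.cons 1 y)) ↔
    ((∀ z : Fin (k + 1) → ZMod 2, g z = ∑ i, z i) ∨
     (∀ z : Fin (k + 1) → ZMod 2, g z = 1 + ∑ i, z i)) := by
  have hzm : ∀ a b : ZMod 2, a ≠ b → a = 1 + b := by decide
  constructor
  · intro hinv
    -- Lemma A: flipping any coordinate changes g
    have flipA : ∀ (z : Fin (k + 1) → ZMod 2) (i : Fin (k + 1)),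
        g (Function.update z i 0) ≠ g (Function.update z i 1) := by
      intro z i
      have key : ∀ a : ZMod 2,
          g (Function.update z i a) = g (Fin.cons a (fun j => z (Equiv.swap 0 i j.succ))) := by
        intro a
        have h := hsym (Equiv.swap 0 i) (Function.update z i a)
        rw [← h]
        congr 1
        funext j
        refine Fin.cases ?_ ?_ j
        · show Function.update z i a (Equiv.swap 0 i 0) = a
          rw [Equiv.swap_apply_left, Function.update_self]
        · intro j'
          show Function.update z i a (Equiv.swap 0 i j'.succ) = z (Equiv.swap 0 i j'.succ)
          have hne : Equiv.swap 0 i j'.succ ≠ i := by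
            intro h'
            have h2 := congrArg (Equiv.swap 0 i) h'
            rw [Equiv.swap_apply_self, Equiv.swap_apply_right] at h2
            exact (Fin.succ_ne_zero j') h2
          rw [Function.update_of_ne hne]
      rw [key 0, key 1]
      exact hinv _
    -- Main claim: g z = g 0 + ∑ z i
    have main : ∀ z : Fin (k + 1) → ZMod 2, g z = g 0 + ∑ i, z i := by
      have aux : ∀ s : Finset (Fin (k + 1)), ∀ z : Fin (k + 1) → ZMod 2,
          (∀ i, z i ≠ 0 → i ∈ s) → g z = g 0 + ∑ i, z i := by
        intro s
        induction s using Finset.induction_on with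
        | empty =>
          intro z hz
          have : z = 0 := by
            funext i
            by_contra h
            exact absurd (hz i h) (Finset.notMem_empty i)
          subst this
          simp
        | @insert a t ha ih =>
          intro z hz
          rcases (by decide : ∀ a : ZMod 2, a = 0 ∨ a = 1) (z a) with h0 | h1
          · apply ih
            intro i hi
            rcases Finset.mem_insert.mp (hz i hi) with rfl | h
            · exact absurd h0 hi
            · exact h
          · set z' := Function.update z a 0 with hz'
            have hsupp : ∀ i, z' i ≠ 0 → i ∈ t := by
              intro i hi
              have hine : i ≠ a := by
                intro h; subst h; simp [hz'] at hi
              rcases Finset.mem_insert.mp (hz i (by rwa [hz', Function.update_of_ne hine] at hi)) with h | h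
              · exact absurd h hine
              · exact h
            have ihz := ih z' hsupp
            have hup : Function.update z a 1 = z := by
              funext i
              by_cases h : i = a
              · subst h; simp [h1]
              · rw [Function.update_of_ne h]
            have hflip := flipA z a
            rw [hup] at hflip
            have hgz : g z = 1 + g z' := hzm _ _ (Ne.symm hflip)
            have h2 : ∑ i, z' i = ∑ i ∈ Finset.univ \ {a}, z i := by
              rw [hz', Finset.sum_update_of_mem (Finset.mem_univ a), zero_add]
            have h3 : ∑ i, z i = z a + ∑ i ∈ Finset.univ \ {a}, z i :=
              Finset.sum_eq_add_sum_sdiff_singleton_of_mem (Finset.mem_univ a) z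
            rw [hgz, ihz, h3, h1, h2]
            ring
      intro z
      exact aux Finset.univ z (fun i _ => Finset.mem_univ i)
    rcases (by decide : ∀ a : ZMod 2, a = 0 ∨ a = 1) (g 0) with h0 | h0
    · left; intro z; rw [main z, h0, zero_add]
    · right; intro z; rw [main z, h0]
  · intro h y
    have hs : ∀ a : ZMod 2, ∑ i, (Fin.cons a y : Fin (k+1) → ZMod 2) i = a + ∑ i, y i :=
      fun a => Fin.sum_cons a y
    rcases h with h | h
    · rw [h, h, hs, hs]
      intro hc
      have : (0 : ZMod 2) = 1 := add_right_cancel hc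
      exact absurd this (by decide)
    · rw [h, h, hs, hs]
      intro hc
      have h2 := add_left_cancel hc
      have : (0 : ZMod 2) = 1 := add_right_cancel h2
      exact absurd this (by decide)
end
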